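/- In an epistemic-gap-free mechanism with imperfect information, for any root-to-node decision path v_1,…,v_k, if v_k ∈ ewin_a(o) and v_k ∉ win_a(ō), then there exist an index i < k and an agent b such that v_i ∈ ewin_b(ō). -/

import Mathlib

inductive Outcome where
  | yes : Outcome
  | no : Outcome
deriving DecidableEq

def Outcome.flip : Outcome → Outcome
  | .yes => .no
  | .no => .yes

/-- A decision-making mechanism (perfect information):
a finite rooted directed tree `(V, E)` with root `root`,
agents `A`, actions `Act`, available-action sets `Δ`,
choice functions `τ`, and a leaf labelling `lab`. -/
structure Mech (V A Act : Type) where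
  finV : Fintype V
  E : V → V → Prop
  root : V
  root_no_parent : ∀ v, ¬ E v root
  unique_parent : ∀ u v w, E u w → E v w → u = v
  reach : ∀ v, Relation.ReflTransGen E root v
  Δ : A → V → Set Act
  Δ_nonempty : ∀ a v, (∃ u, E v u) → (Δ a v).Nonempty
  τ : V → (A → Act) → V
  τ_child : ∀ v δ, (∃ u, E v u) → (∀ b, δ b ∈ Δ b v) → E v (τ v δ)
  lab : V → Outcome

namespace Mech

variable {V A Act : Type}

def IsLeaf (M : Mech V A Act) (v : V) : Prop := ∀ u, ¬ M.E v u

def IsDecision (M : Mech V A Act) (v : V) : Prop := ∃ u, M.E v u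

/-- `Next a d v` : the set of children the process can move to from `v`
when agent `a` chooses action `d`. -/
def Next (M : Mech V A Act) (a : A) (d : Act) (v : V) : Set V :=
  { u | ∃ δ : A → Act, (∀ b, δ b ∈ M.Δ b v) ∧ δ a = d ∧ u = M.τ v δ }

/-- `win_a(o)`: the smallest set containing all leaves labelled `o` and
closed under: if `Next a d v ⊆ win_a(o)` for some available action `d`
at a decision node `v`, then `v ∈ win_a(o)`. -/
inductive Win (M : Mech V A Act) (a : A) (o : Outcome) : V → Prop where
  | leaf (v : V) : M.IsLeaf v → M.lab v = o → Win M a o v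
  | step (v : V) (d : Act) : M.IsDecision v → d ∈ M.Δ a v →
      (∀ u ∈ M.Next a d v, Win M a o u) → Win M a o v

/-- A decision path starting at the root. -/
def RootPath (M : Mech V A Act) (l : List V) : Prop :=
  l.head? = some M.root ∧ l.Chain' M.E

/-- Agent `a` is (counterfactually) responsible at leaf `v`. -/
def Responsible (M : Mech V A Act) (a : A) (v : V) : Prop :=
  ∃ l : List V, M.RootPath l ∧ l.getLast? = some v ∧
    ∃ u ∈ l, M.IsDecision u ∧ M.Win a (M.lab v).flip u

def GapFree (M : Mech V A Act) : Prop :=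
  ∀ v, M.IsLeaf v → ∃ a, M.Responsible a v

def Dictator (M : Mech V A Act) (a : A) (v : V) : Prop :=
  M.Win a Outcome.yes v ∧ M.Win a Outcome.no v

def ElectedDictatorship (M : Mech V A Act) : Prop :=
  ∀ (l : List V) (v : V), M.RootPath l → l.getLast? = some v → M.IsLeaf v →
    ∃ u ∈ l, ∃ a, M.Dictator a u

end Mech

/-- A decision-making mechanism with imperfect information. -/
structure IMech (V A Act : Type) extends Mech V A Act where
  sim : A → V → V → Prop
  sim_equiv : ∀ a, Equivalence (sim a)
  sim_decision : ∀ a u v, sim a u v → ((∃ w, E u w) ↔ (∃ w, E v w))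
  sim_Δ : ∀ a u v, sim a u v → Δ a u = Δ a v

namespace IMech

variable {V A Act : Type}

/-- `Next a d ([v]_a)` : the union of `Next a d u` over all `u ∼_a v`. -/
def NextCl (M : IMech V A Act) (a : A) (d : Act) (v : V) : Set V :=
  { w | ∃ u, M.sim a v u ∧ w ∈ M.toMech.Next a d u }

/-- `ewin_a(o)`. -/
inductive EWin (M : IMech V A Act) (a : A) (o : Outcome) : V → Prop where
  | leaf (v : V) : M.toMech.IsLeaf v → M.lab v = o → EWin M a o v
  | known (v : V) (d : Act) : M.toMech.IsDecision v → d ∈ M.Δ a v →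
      (∀ w ∈ M.NextCl a d v, EWin M a o w) → EWin M a o v
  | blind (v : V) : M.toMech.IsDecision v →
      (∀ d ∈ M.Δ a v, ∀ w ∈ M.toMech.Next a d v, EWin M a o w) → EWin M a o v

/-- `uwin_a(o)`. -/
inductive UWin (M : IMech V A Act) (a : A) (o : Outcome) : V → Prop where
  | leaf (v : V) : M.toMech.IsLeaf v → M.lab v = o → UWin M a o v
  | known (v : V) (d : Act) : M.toMech.IsDecision v → d ∈ M.Δ a v →
      (∀ w ∈ M.NextCl a d v, UWin M a o w) → UWin M a o v

def EpistemicallyResponsible (M : IMech V A Act) (a : A) (v : V) : Prop :=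
  ∃ l : List V, M.toMech.RootPath l ∧ l.getLast? = some v ∧
    ∃ u ∈ l, M.toMech.IsDecision u ∧ M.EWin a (M.lab v).flip u

def EpistemicGapFree (M : IMech V A Act) : Prop :=
  ∀ v, M.toMech.IsLeaf v → ∃ a, M.EpistemicallyResponsible a v

def EpistemicDictator (M : IMech V A Act) (a : A) (v : V) : Prop :=
  M.EWin a Outcome.yes v ∧ M.EWin a Outcome.no v

def ElectedEpistemicDictatorship (M : IMech V A Act) : Prop :=
  ∀ (l : List V) (v : V), M.toMech.RootPath l → l.getLast? = some v →
    M.toMech.IsLeaf v → ∃ u ∈ l, ∃ a, M.EpistemicDictator a u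

def SemiEpistemicDictator (M : IMech V A Act) (a : A) (v : V) : Prop :=
  ∃ o : Outcome, M.EWin a o v ∧ M.toMech.Win a o.flip v

def ElectedSemiEpistemicDictatorship (M : IMech V A Act) : Prop :=
  ∀ (l : List V) (v : V), M.toMech.RootPath l → l.getLast? = some v →
    M.toMech.IsLeaf v → ∃ u ∈ l, ∃ a, M.SemiEpistemicDictator a u

end IMech

/-!
Since `ewin ⊆ win`, the node `v_k` lies in `win_a(o) \ win_a(ō)`, and from there `a` can steer the
play to a leaf `w` labelled `o` without ever leaving `win_a(o) \ win_a(ō)`. Two agents can never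
force opposite outcomes at the same node (merge their actions into one profile), so no node of
`win_a(o) \ win_a(ō)` lies in any `win_b(ō)`. Gap-freeness at `w` yields a node of some
`ewin_b(ō) ⊆ win_b(ō)` on the unique root path to `w`, which is therefore strictly above `v_k`.
-/

theorem Outcome.flip_ne (o : Outcome) : o.flip ≠ o := by
  cases o <;> decide

namespace Mech

variable {V A Act : Type} {M : Mech V A Act}

theorem exists_profile_of_ne {a b : A} (hab : a ≠ b) {v : V} (hv : M.IsDecision v) {d e : Act}
    (hd : d ∈ M.Δ a v) (he : e ∈ M.Δ b v) :
    ∃ δ : A → Act, (∀ c, δ c ∈ M.Δ c v) ∧ δ a = d ∧ δ b = e := by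
  classical
  choose f hf using fun c => M.Δ_nonempty c v hv
  refine ⟨Function.update (Function.update f b e) a d, fun c => ?_, by simp, by simp [hab.symm]⟩
  by_cases hca : c = a
  · subst hca; simpa using hd
  · by_cases hcb : c = b
    · subst hcb; simpa [hca] using he
    · simpa [hca, hcb] using hf c

theorem E_of_mem_next {a : A} {d : Act} {v u : V} (hv : M.IsDecision v) (hu : u ∈ M.Next a d v) :
    M.E v u := by
  obtain ⟨δ, hδ, -, rfl⟩ := hu
  exact M.τ_child v δ hv hδ

theorem Win.lab_eq {a : A} {o : Outcome} {v : V} (h : M.Win a o v) (hv : M.IsLeaf v) :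
    M.lab v = o := by
  cases h with
  | leaf _ _ hlab => exact hlab
  | step _ _ hdec => exact absurd hdec.choose_spec (hv _)

theorem Win.not_win_flip_of_ne {a b : A} (hab : a ≠ b) {o : Outcome} {v : V}
    (ha : M.Win a o v) : ¬ M.Win b o.flip v := by
  induction ha with
  | leaf v hleaf hlab =>
    intro hb
    exact o.flip_ne ((hb.lab_eq hleaf).symm.trans hlab)
  | step v d hdec hd _ ih =>
    rintro (⟨_, hleaf, _⟩ | ⟨_, e, -, he, hb⟩)
    · exact hleaf _ hdec.choose_spec
    obtain ⟨δ, hδ, hδa, hδb⟩ := exists_profile_of_ne hab hdec hd he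
    exact ih _ ⟨δ, hδ, hδa, rfl⟩ (hb _ ⟨δ, hδ, hδb, rfl⟩)

theorem Win.not_win_flip {a : A} {o : Outcome} {v : V} (ha : M.Win a o v)
    (ha' : ¬ M.Win a o.flip v) (b : A) : ¬ M.Win b o.flip v := by
  by_cases hab : a = b
  · exact hab ▸ ha'
  · exact ha.not_win_flip_of_ne hab

theorem exists_chain_to_leaf {a : A} {o : Outcome} {v : V} (h : M.Win a o v)
    (h' : ¬ M.Win a o.flip v) :
    ∃ ext : List V, (v :: ext).IsChain M.E ∧
      (∀ u ∈ v :: ext, M.Win a o u ∧ ¬ M.Win a o.flip u) ∧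
      M.IsLeaf ((v :: ext).getLast (List.cons_ne_nil v ext)) := by
  induction h with
  | leaf v hleaf _ =>
    exact ⟨[], .singleton v, by simpa using ⟨.leaf v hleaf ‹_›, h'⟩, hleaf⟩
  | step v d hdec hd hnext ih =>
    obtain ⟨u, hu, hu'⟩ : ∃ u ∈ M.Next a d v, ¬ M.Win a o.flip u := by
      by_contra! hall
      exact h' (.step v d hdec hd hall)
    obtain ⟨ext, hchain, hforce, hleaf⟩ := ih u hu hu'
    refine ⟨u :: ext, .cons_cons (E_of_mem_next hdec hu) hchain, ?_, by simpa using hleaf⟩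
    rintro x (_ | ⟨_, hx⟩)
    · exact ⟨.step v d hdec hd hnext, h'⟩
    · exact hforce x hx

theorem eq_of_isChain_parent {l₁ l₂ : List V} (h₁ : l₁.IsChain (fun u v => M.E v u))
    (h₂ : l₂.IsChain (fun u v => M.E v u)) (hhead : l₁.head? = l₂.head?)
    (hroot₁ : l₁.getLast? = some M.root) (hroot₂ : l₂.getLast? = some M.root) : l₁ = l₂ := by
  induction l₁ generalizing l₂ with
  | nil => simpa using hhead.symm
  | cons x t ih =>
    obtain ⟨t₂, rfl⟩ : ∃ t₂, l₂ = x :: t₂ := by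
      cases l₂ <;> simp_all
    rcases t with _ | ⟨p, t⟩ <;> rcases t₂ with _ | ⟨p₂, t₂⟩
    · rfl
    · simp only [List.getLast?_singleton, Option.some.injEq] at hroot₁
      exact absurd (hroot₁ ▸ (List.isChain_cons_cons.mp h₂).1) (M.root_no_parent p₂)
    · simp only [List.getLast?_singleton, Option.some.injEq] at hroot₂
      exact absurd (hroot₂ ▸ (List.isChain_cons_cons.mp h₁).1) (M.root_no_parent p)
    · rw [List.isChain_cons_cons] at h₁ h₂
      obtain rfl := M.unique_parent p p₂ x h₁.1 h₂.1
      rw [ih h₁.2 h₂.2 rfl (by simpa using hroot₁) (by simpa using hroot₂)]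

theorem RootPath.eq {l₁ l₂ : List V} {w : V} (h₁ : M.RootPath l₁) (h₂ : M.RootPath l₂)
    (hw₁ : l₁.getLast? = some w) (hw₂ : l₂.getLast? = some w) : l₁ = l₂ := by
  refine List.reverse_injective (eq_of_isChain_parent (M := M) ?_ ?_ ?_ ?_ ?_)
  · exact List.isChain_reverse.mpr h₁.2
  · exact List.isChain_reverse.mpr h₂.2
  · simp [hw₁, hw₂]
  · simpa using h₁.1
  · simpa using h₂.1

theorem RootPath.append {s ext : List V} {v : V} (hs : M.RootPath (s ++ [v]))
    (hext : (v :: ext).IsChain M.E) : M.RootPath (s ++ v :: ext) := by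
  refine ⟨?_, ?_⟩
  · cases s <;> simpa using hs.1
  · show List.IsChain M.E _
    simpa using hs.2.append_overlap (l₃ := ext) (by simpa using hext) (List.cons_ne_nil v [])

end Mech

namespace IMech

variable {V A Act : Type} {M : IMech V A Act}

theorem EWin.toWin {a : A} {o : Outcome} {v : V} (h : M.EWin a o v) : M.toMech.Win a o v := by
  induction h with
  | leaf v hleaf hlab => exact .leaf v hleaf hlab
  | known v d hdec hd _ ih =>
    exact .step v d hdec hd fun u hu => ih u ⟨v, (M.sim_equiv a).refl v, hu⟩
  | blind v hdec _ ih =>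
    obtain ⟨d, hd⟩ := M.Δ_nonempty a v hdec
    exact .step v d hdec hd (ih d hd)

end IMech

theorem stmt8 {V A Act : Type} (M : IMech V A Act)
    (hgf : M.EpistemicGapFree) (a : A) (o : Outcome)
    (l : List V) (vk : V) (hl : M.toMech.RootPath l) (hlast : l.getLast? = some vk)
    (h1 : M.EWin a o vk) (h2 : ¬ M.toMech.Win a o.flip vk) :
    ∃ i : ℕ, ∃ hi : i + 1 < l.length, ∃ b : A,
      M.EWin b o.flip (l.get ⟨i, Nat.lt_of_succ_lt hi⟩) := by
  obtain ⟨s, rfl⟩ := List.getLast?_eq_some_iff.mp hlast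
  obtain ⟨ext, hchain, hforce, hleaf⟩ := Mech.exists_chain_to_leaf h1.toWin h2
  set w := (vk :: ext).getLast (List.cons_ne_nil vk ext)
  have hpath : M.toMech.RootPath (s ++ vk :: ext) := hl.append hchain
  have hw : (s ++ vk :: ext).getLast? = some w := by
    rw [List.getLast?_append_of_ne_nil _ (List.cons_ne_nil _ _)]
    exact List.getLast?_eq_getLast_of_ne_nil _
  obtain ⟨b, l', hl', hl'w, u, hu, -, hub⟩ := hgf w hleaf
  obtain rfl := hl'.eq hpath hl'w hw
  rw [(hforce w (List.getLast_mem _)).1.lab_eq hleaf] at hub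
  rcases List.mem_append.mp hu with hus | hu
  · obtain ⟨i, hi, rfl⟩ := List.getElem_of_mem hus
    exact ⟨i, by simpa using hi, b, by simpa [List.getElem_append_left hi] using hub⟩
  · exact absurd hub.toWin ((hforce u hu).1.not_win_flip (hforce u hu).2 b)
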